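/- Assume in addition that K is perfect, i.e. the p-power map x ↦ x^p is bijective on K. Then the additive map K → c₀(ℤ, K)/Im(F − 1) sending r to the class of δ₀r is surjective, and its kernel is exactly K^{++} = {r ∈ K : ‖r‖ < 1}. Consequently it induces an isomorphism of additive groups coker(F − 1 : K⟨F^{±1}⟩ → K⟨F^{±1}⟩) ≅ K/K^{++}. -/

import Mathlib

/-!
Write `q = p ^ f`. Since `‖x ^ q‖ = ‖x‖ ^ q`, the geometric series `∑ₖ Fᵏ a` converges in `c₀`
as soon as `sup ‖a i‖ < 1`, and `-∑ₖ Fᵏ a` is then a preimage of `a` under `F - 1`. The finitely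
many large entries of `a` are moved to index `0` one step at a time, using
`δⱼ₊₁ (y ^ q) = (F - 1) (δⱼ y) + δⱼ y`, which needs `q`-th roots in `K`.

Conversely, if `(F - 1) b = δ₀ r` then `bₖ = b₀ ^ qᵏ` for `k ≥ 0`, so `b ∈ c₀` forces `‖b₀‖ < 1`,
and `b₋₁₋ₖ ^ qᵏ = b₋₁`, so `‖b₋₁‖ ≤ ‖b₋₁₋ₖ‖ → 0`; hence `r = -b₀` has norm `< 1`.
-/

open Filter

/-- A two-sided sequence `b : ℤ → K` tends to `0` as `|i| → ∞`,
i.e. it lies in `c₀(ℤ, K)`. -/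
def IsC0 {K : Type*} [NormedField K] (b : ℤ → K) : Prop :=
  Tendsto b cofinite (nhds 0)

open Topology

section C0

variable (K : Type*) [NormedField K]

def c0 : AddSubgroup (ℤ → K) where
  carrier := {b | IsC0 b}
  add_mem' ha hb := by rw [Set.mem_ofPred_eq, IsC0, ← add_zero (0 : K)]; exact ha.add hb
  zero_mem' := tendsto_const_nhds
  neg_mem' ha := by rw [Set.mem_ofPred_eq, IsC0, ← neg_zero]; exact ha.neg

variable {K}

theorem mem_c0 {b : ℤ → K} : b ∈ c0 K ↔ IsC0 b := Iff.rfl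

theorem IsC0.eventually_norm_le {b : ℤ → K} (hb : IsC0 b) {ε : ℝ} (hε : 0 < ε) :
    ∀ᶠ i in cofinite, ‖b i‖ ≤ ε := by
  simpa using hb.eventually (Metric.closedBall_mem_nhds 0 hε)

theorem IsC0.of_norm_le {a b : ℤ → K} (ha : IsC0 a) (h : ∀ i, ‖b i‖ ≤ ‖a i‖) : IsC0 b :=
  squeeze_zero_norm h (tendsto_zero_iff_norm_tendsto_zero.1 ha)

theorem IsC0.comp_sub_const {a : ℤ → K} (ha : IsC0 a) (k : ℤ) : IsC0 fun i => a (i - k) :=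
  ha.comp sub_left_injective.tendsto_cofinite

theorem IsC0.tendsto_comp_atTop {b : ℤ → K} (hb : IsC0 b) {g : ℕ → ℤ} (hg : g.Injective) :
    Tendsto (b ∘ g) atTop (𝓝 0) := by
  rw [← Nat.cofinite_eq_atTop]
  exact hb.comp hg.tendsto_cofinite

theorem isC0_of_finite_support {b : ℤ → K} (hb : (Function.support b).Finite) : IsC0 b :=
  tendsto_const_nhds.congr' <| eventuallyEq_of_mem hb.compl_mem_cofinite fun _ hi => by
    simpa [eq_comm] using hi

theorem isC0_single (j : ℤ) (c : K) : IsC0 (Pi.single j c) :=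
  isC0_of_finite_support ((Set.finite_singleton j).subset Pi.support_single_subset)

end C0

section PowPow

variable {K : Type*} [NormedDivisionRing K] {q : ℕ}

theorem norm_pow_pow_le_pow (hq : 1 < q) {c : ℝ} (hc : c ≤ 1) {x : K} (hx : ‖x‖ ≤ c) (k : ℕ) :
    ‖x ^ q ^ k‖ ≤ c ^ k := by
  rw [norm_pow]
  exact (pow_le_pow_left₀ (norm_nonneg _) hx _).trans
    (pow_le_pow_of_le_one ((norm_nonneg _).trans hx) hc (Nat.lt_pow_self hq).le)

theorem eq_zero_of_tendsto_of_pow_succ_eq (hq : q ≠ 0) {x : ℕ → K} (hx : Tendsto x atTop (𝓝 0))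
    (h : ∀ k, x (k + 1) ^ q = x k) : x 0 = 0 := by
  have hpow : ∀ k, x k ^ q ^ k = x 0 := by
    intro k
    induction k with
    | zero => simp
    | succ k ih => rw [pow_succ', pow_mul, h, ih]
  have hle : ∀ᶠ k in atTop, ‖x 0‖ ≤ ‖x k‖ := by
    filter_upwards [(tendsto_zero_iff_norm_tendsto_zero.1 hx).eventually_le_const one_pos]
      with k hk
    rw [← hpow k, norm_pow]
    exact pow_le_of_le_one (norm_nonneg _) hk (pow_ne_zero k hq)
  exact norm_le_zero_iff.1 (ge_of_tendsto (tendsto_zero_iff_norm_tendsto_zero.1 hx) hle)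

theorem norm_lt_one_of_tendsto_pow_pow (hq : q ≠ 0) {y : K}
    (h : Tendsto (fun k : ℕ => y ^ q ^ k) atTop (𝓝 0)) : ‖y‖ < 1 := by
  obtain ⟨k, hk⟩ := (h.eventually (Metric.ball_mem_nhds 0 one_pos)).exists
  rw [dist_zero_right, norm_pow] at hk
  exact (pow_lt_one_iff_of_nonneg (norm_nonneg y) (pow_ne_zero k hq)).1 hk

end PowPow

section Frobenius

variable (K : Type*) [NormedField K] (p f : ℕ) [ExpChar K p]

def frobSubOne : (ℤ → K) →+ (ℤ → K) where
  toFun b i := b (i - 1) ^ p ^ f - b i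
  map_zero' := by ext; simp [zero_pow (expChar_pow_pos K p f).ne']
  map_add' a b := by ext; simp only [Pi.add_apply, add_pow_expChar_pow]; ring

def rangeSupDelta : AddSubgroup (ℤ → K) :=
  (c0 K).map (frobSubOne K p f) ⊔ (AddMonoidHom.single (fun _ : ℤ => K) 0).range

variable {K p f}

theorem frobSubOne_apply (b : ℤ → K) (i : ℤ) : frobSubOne K p f b i = b (i - 1) ^ p ^ f - b i :=
  rfl

theorem frobSubOne_single (j : ℤ) (c : K) :
    frobSubOne K p f (Pi.single j c) = Pi.single (j + 1) (c ^ p ^ f) - Pi.single j c := by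
  ext i
  have hq : p ^ f ≠ 0 := (expChar_pow_pos K p f).ne'
  by_cases hi : i = j + 1
  · simp [frobSubOne_apply, hi]
  · simp [frobSubOne_apply, Pi.single_apply, hi, show i - 1 ≠ j by omega, zero_pow hq]

theorem norm_lt_one_of_frobSubOne_eq_single {b : ℤ → K} (hb : IsC0 b) {r : K}
    (h : frobSubOne K p f b = Pi.single 0 r) : ‖r‖ < 1 := by
  have hq : p ^ f ≠ 0 := (expChar_pow_pos K p f).ne'
  have hstep : ∀ i ≠ 0, b (i - 1) ^ p ^ f = b i := fun i hi => by
    simpa [frobSubOne_apply, hi, sub_eq_zero] using congrFun h i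
  have hneg : b (-1) = 0 := by
    refine eq_zero_of_tendsto_of_pow_succ_eq hq (x := fun k : ℕ => b (-1 - k))
      (hb.tendsto_comp_atTop fun m n hmn => by simpa using hmn) fun k => ?_
    convert hstep (-1 - k) (by omega) using 3
    push_cast
    ring
  have hpos : ∀ k : ℕ, b k = b 0 ^ (p ^ f) ^ k := by
    intro k
    induction k with
    | zero => simp
    | succ k ih =>
      rw [Nat.cast_succ, ← hstep _ (by omega), add_sub_cancel_right, ih, ← pow_mul, pow_succ]
  have hr : r = -b 0 := by
    simpa [frobSubOne_apply, hneg, zero_pow hq, eq_comm] using congrFun h 0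
  rw [hr, norm_neg]
  refine norm_lt_one_of_tendsto_pow_pow hq ?_
  simpa only [Function.comp_def, hpos] using hb.tendsto_comp_atTop Nat.cast_injective

theorem mem_rangeSupDelta {a : ℤ → K} :
    a ∈ rangeSupDelta K p f ↔ ∃ r b, IsC0 b ∧ frobSubOne K p f b + Pi.single 0 r = a := by
  rw [rangeSupDelta, AddSubgroup.mem_sup]
  constructor
  · rintro ⟨_, ⟨b, hb, rfl⟩, _, ⟨r, rfl⟩, rfl⟩
    exact ⟨r, b, hb, rfl⟩
  · rintro ⟨r, b, hb, rfl⟩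
    exact ⟨_, ⟨b, hb, rfl⟩, _, ⟨r, rfl⟩, rfl⟩

theorem single_mem_rangeSupDelta [PerfectRing K p] (j : ℤ) (c : K) :
    Pi.single j c ∈ rangeSupDelta K p f := by
  have hF (j : ℤ) (c : K) : frobSubOne K p f (Pi.single j c) ∈ rangeSupDelta K p f :=
    AddSubgroup.mem_sup_left (AddSubgroup.mem_map_of_mem _ (isC0_single j c))
  induction j using Int.induction_on generalizing c with
  | zero => exact AddSubgroup.mem_sup_right ⟨c, rfl⟩
  | succ j ih =>
    obtain ⟨y, rfl⟩ := (bijective_iterateFrobenius K p f).2 c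
    have hshift : Pi.single (j + 1 : ℤ) (y ^ p ^ f) =
        frobSubOne K p f (Pi.single (j : ℤ) y) + Pi.single (j : ℤ) y := by
      rw [frobSubOne_single, sub_add_cancel]
    rw [iterateFrobenius_def, hshift]
    exact add_mem (hF j y) (ih y)
  | pred j ih =>
    have hshift : Pi.single (-j - 1 : ℤ) c =
        Pi.single (-j : ℤ) (c ^ p ^ f) - frobSubOne K p f (Pi.single (-j - 1 : ℤ) c) := by
      rw [frobSubOne_single, sub_add_cancel, sub_sub_cancel]
    rw [hshift]
    exact sub_mem (ih _) (hF _ c)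

theorem mem_rangeSupDelta_of_finite_support [PerfectRing K p] {a : ℤ → K}
    (ha : (Function.support a).Finite) : a ∈ rangeSupDelta K p f := by
  obtain ⟨g, rfl⟩ : ∃ g : ℤ →₀ K, ⇑g = a := ⟨Finsupp.ofSupportFinite a ha, rfl⟩
  clear ha
  induction g using Finsupp.induction_linear with
  | zero => exact zero_mem _
  | add g h hg hh => exact add_mem hg hh
  | single j c => rw [Finsupp.single_eq_pi_single]; exact single_mem_rangeSupDelta j c

end Frobenius

section Series

variable {K : Type*} [NormedField K] {q : ℕ} {a : ℤ → K} {c : ℝ}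

/-- The geometric series `∑ₖ Fᵏ a` for `(1 - F)⁻¹ a`. -/
noncomputable def frobSeries (q : ℕ) (a : ℤ → K) (i : ℤ) : K :=
  ∑' k : ℕ, a (i - k) ^ q ^ k

theorem summable_frobSeries [CompleteSpace K] (hq : 1 < q) (hc : c < 1) (hac : ∀ i, ‖a i‖ ≤ c)
    (i : ℤ) : Summable fun k : ℕ => a (i - k) ^ q ^ k :=
  .of_norm_bounded (summable_geometric_of_lt_one ((norm_nonneg _).trans (hac 0)) hc)
    fun k => norm_pow_pow_le_pow hq hc.le (hac _) k

theorem frobSeries_eq_add_pow [CompleteSpace K] {p f : ℕ} [ExpChar K p] (hpf : 1 < p ^ f)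
    (hc : c < 1) (hac : ∀ i, ‖a i‖ ≤ c) (i : ℤ) :
    frobSeries (p ^ f) a i = a i + frobSeries (p ^ f) a (i - 1) ^ p ^ f := by
  have hmap := (summable_frobSeries hpf hc hac (i - 1)).hasSum.map (iterateFrobenius K p f)
    (continuous_pow (p ^ f))
  rw [iterateFrobenius_def] at hmap
  rw [frobSeries, (summable_frobSeries hpf hc hac i).tsum_eq_zero_add, frobSeries, ← hmap.tsum_eq]
  congr 1
  · simp
  · congr 1
    ext k
    rw [Function.comp_apply, iterateFrobenius_def, ← pow_mul (a _), ← pow_succ, Nat.cast_succ,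
      sub_sub, add_comm 1]

theorem isC0_frobSeries [IsUltrametricDist K] (hq : 1 < q) (ha : IsC0 a) (hc : c < 1)
    (hac : ∀ i, ‖a i‖ ≤ c) : IsC0 (frobSeries q a) := by
  rw [IsC0, Metric.nhds_basis_closedBall.tendsto_right_iff]
  intro ε hε
  obtain ⟨M, hM⟩ := exists_pow_lt_of_lt_one hε hc
  have hnear : ∀ᶠ i in cofinite, ∀ k : Fin M, ‖a (i - k)‖ ≤ ε :=
    eventually_all.2 fun k => (ha.comp_sub_const k).eventually_norm_le hε
  filter_upwards [hnear] with i hi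
  rw [mem_closedBall_zero_iff]
  refine IsUltrametricDist.norm_tsum_le_of_forall_le_of_nonneg hε.le fun k => ?_
  rcases lt_or_ge k M with hk | hk
  · rw [norm_pow]
    exact (pow_le_of_le_one (norm_nonneg _) ((hac _).trans hc.le)
      (pow_ne_zero k (by omega))).trans (hi ⟨k, hk⟩)
  · exact (norm_pow_pow_le_pow hq hc.le (hac _) k).trans
      ((pow_le_pow_of_le_one ((norm_nonneg _).trans (hac 0)) hc.le hk).trans hM.le)

end Series

section Cokernel

variable {K : Type*} [NormedField K] [IsUltrametricDist K] [CompleteSpace K] {p f : ℕ}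
  [ExpChar K p]

theorem mem_map_frobSubOne_of_norm_le (hpf : 1 < p ^ f) {a : ℤ → K} (ha : IsC0 a) {c : ℝ}
    (hc : c < 1) (hac : ∀ i, ‖a i‖ ≤ c) : a ∈ (c0 K).map (frobSubOne K p f) := by
  refine ⟨-frobSeries (p ^ f) a, neg_mem (isC0_frobSeries hpf ha hc hac), ?_⟩
  ext i
  rw [map_neg, Pi.neg_apply, frobSubOne_apply, frobSeries_eq_add_pow hpf hc hac i]
  ring

theorem single_zero_mem_map_frobSubOne_iff (hpf : 1 < p ^ f) {r : K} :
    Pi.single 0 r ∈ (c0 K).map (frobSubOne K p f) ↔ ‖r‖ < 1 := by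
  refine ⟨fun ⟨b, hb, h⟩ => norm_lt_one_of_frobSubOne_eq_single hb h, fun hr => ?_⟩
  refine mem_map_frobSubOne_of_norm_le hpf (isC0_single 0 r) hr fun i => ?_
  rw [Pi.single_apply]
  split_ifs <;> simp

theorem mem_rangeSupDelta_of_isC0 [PerfectRing K p] (hpf : 1 < p ^ f) {a : ℤ → K}
    (ha : IsC0 a) : a ∈ rangeSupDelta K p f := by
  set S := {i | ¬‖a i‖ ≤ 2⁻¹}
  have hS : S.Finite := eventually_cofinite.1 (ha.eventually_norm_le (by norm_num))
  rw [← S.indicator_self_add_compl a]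
  refine add_mem (mem_rangeSupDelta_of_finite_support (hS.subset Set.support_indicator_subset))
    (AddSubgroup.mem_sup_left ?_)
  refine mem_map_frobSubOne_of_norm_le hpf (ha.of_norm_le (norm_indicator_le_norm_self a))
    (by norm_num : (2⁻¹ : ℝ) < 1) fun i => ?_
  by_cases hi : i ∈ Sᶜ
  · rw [Set.indicator_of_mem hi]
    simpa [S] using hi
  · rw [Set.indicator_of_notMem hi, norm_zero]
    norm_num

end Cokernel

/-- Assume `K` is perfect. The additive map `K → c₀(ℤ, K) / Im(F - 1)` sending `r` to the
class of `δ₀ r` is surjective, and its kernel is exactly `K^{++} = {r : ‖r‖ < 1}`.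
Consequently `coker(F - 1 : K⟨F^{±1}⟩ → K⟨F^{±1}⟩) ≅ K / K^{++}`. -/
theorem coker_FSubOne_eq_K_mod_Kpp
    (p f q : ℕ) (hp : p.Prime) (hf : 1 ≤ f) (hq : q = p ^ f)
    (K : Type*) [NontriviallyNormedField K] [IsUltrametricDist K]
    [CompleteSpace K] [CharP K p]
    (hperf : Function.Bijective fun x : K => x ^ p) :
    (∀ a : ℤ → K, IsC0 a →
      ∃ (r : K) (b : ℤ → K), IsC0 b ∧
        ∀ i : ℤ, a i = ((b (i - 1)) ^ q - b i) + (if i = 0 then r else 0)) ∧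
    (∀ r : K,
      (∃ b : ℤ → K, IsC0 b ∧
        ∀ i : ℤ, (b (i - 1)) ^ q - b i = if i = 0 then r else 0) ↔ ‖r‖ < 1) := by
  have : Fact p.Prime := ⟨hp⟩
  have : PerfectRing K p := ⟨hperf⟩
  subst hq
  have hpf : 1 < p ^ f := Nat.one_lt_pow (by omega) hp.one_lt
  refine ⟨fun a ha => ?_, fun r => ?_⟩
  · obtain ⟨r, b, hb, rfl⟩ := mem_rangeSupDelta.1 (mem_rangeSupDelta_of_isC0 hpf ha)
    exact ⟨r, b, hb, fun i => by simp [frobSubOne_apply, Pi.single_apply]⟩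
  · rw [← single_zero_mem_map_frobSubOne_iff hpf]
    simp only [AddSubgroup.mem_map, mem_c0, funext_iff, frobSubOne_apply, Pi.single_apply]
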